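/- arXiv:1911.10158 — 3 statements merged into one kernel-verified Lean document; each statement's English description precedes it below -/
import Mathlib

section
/- There exist subgroups D and C of the Pauli group P_{1,2} such that: D is isomorphic to the dihedral group of order 8 (DihedralGroup 4), C is cyclic of order 4 and contained in the center of P_{1,2}, the join D ⊔ C equals P_{1,2}, and the intersection D ∩ C has order 2. In other words, P_{1,2} is the weak central product of a dihedral group of order 8 and a cyclic group of order 4 amalgamated over a subgroup of order 2. -/
open Matrix

/-- The shift matrix `X_k` on `n` qubits: `(X_k)_{u,v} = 1` if `u = v + e_k`, else `0`. -/
def shiftX2 (n : ℕ) (k : Fin n) :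
    Matrix (Fin n → ZMod 2) (Fin n → ZMod 2) ℂ :=
  Matrix.of fun u v => if u = v + Pi.single k 1 then 1 else 0

/-- The clock matrix `Z_k` on `n` qubits: diagonal with `(Z_k)_{v,v} = (−1)^{(v k).val}`. -/
def clockZ2 (n : ℕ) (k : Fin n) :
    Matrix (Fin n → ZMod 2) (Fin n → ZMod 2) ℂ :=
  Matrix.diagonal fun v => (-1 : ℂ) ^ (v k).val

/-- The Pauli group `P_{n,2}` on `n` qubits: the subgroup of the units of the matrix ring
generated by the scalar matrix `i·I` and the shift and clock matrices `X_k`, `Z_k`. -/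
noncomputable def PauliGroup2 (n : ℕ) :
    Subgroup (Matrix (Fin n → ZMod 2) (Fin n → ZMod 2) ℂ)ˣ :=
  Subgroup.closure
    {u : (Matrix (Fin n → ZMod 2) (Fin n → ZMod 2) ℂ)ˣ |
      (u : Matrix (Fin n → ZMod 2) (Fin n → ZMod 2) ℂ) = Complex.I • 1 ∨
      ∃ k : Fin n,
        (u : Matrix (Fin n → ZMod 2) (Fin n → ZMod 2) ℂ) = shiftX2 n k ∨
        (u : Matrix (Fin n → ZMod 2) (Fin n → ZMod 2) ℂ) = clockZ2 n k}

/-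
In `P_{1,2}` the matrices `X` and `X Z` satisfy the dihedral relations `X² = 1`, `(X Z)⁴ = 1`,
`X (X Z) X = (X Z)⁻¹`, since `X` and `Z` anticommute; as `(X Z)² = -1 ≠ 1` and `X` does not
commute with `X Z`, they span a copy `D` of the dihedral group of order 8. The scalar `i I`
generates a central cyclic group `C` of order 4, and `X`, `Z`, `i I` generate everything, so
`D ⊔ C = ⊤`. Finally `D ∩ C` is a proper nontrivial subgroup of `C`: it contains `-1 = (X Z)²`,
but not `i I`, because every element of `D` has real entries.
-/

namespace DihedralGroup

variable {n : ℕ} {G : Type*} [Group G] {a b : G}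

theorem pow_val_natCast (ha : a ^ n = 1) (k : ℕ) : a ^ (k : ZMod n).val = a ^ k := by
  rw [ZMod.val_natCast, ← pow_eq_pow_mod _ ha]

variable [NeZero n]

theorem pow_val_add (ha : a ^ n = 1) (i j : ZMod n) :
    a ^ (i + j).val = a ^ i.val * a ^ j.val := by
  rw [ZMod.val_add, ← pow_eq_pow_mod _ ha, pow_add]

theorem pow_val_neg (ha : a ^ n = 1) (i : ZMod n) : a ^ (-i).val = (a ^ i.val)⁻¹ :=
  eq_inv_of_mul_eq_one_left <| by rw [← pow_val_add ha, neg_add_cancel, ZMod.val_zero, pow_zero]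

/-- The homomorphism out of `DihedralGroup n` given by the presentation
`⟨a, b | aⁿ = b² = 1, b a b = a⁻¹⟩`, sending `r 1 ↦ a` and `sr 0 ↦ b`. -/
def lift (a b : G) (ha : a ^ n = 1) (hb : b * b = 1) (hab : b * a * b = a⁻¹) :
    DihedralGroup n →* G where
  toFun
    | r i => a ^ i.val
    | sr i => b * a ^ i.val
  map_one' := by
    change a ^ (0 : ZMod n).val = 1
    rw [ZMod.val_zero, pow_zero]
  map_mul' x y := by
    have hconj (i : ZMod n) : b * a ^ i.val = a ^ (-i).val * b := by
      have : SemiconjBy b a a⁻¹ := by rw [SemiconjBy, ← hab, mul_assoc, mul_assoc, hb, mul_one]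
      rw [pow_val_neg ha, ← inv_pow, (this.pow_right i.val).eq]
    rcases x with i | i <;> rcases y with j | j
    · simp only [r_mul_r, pow_val_add ha]
    · simp only [r_mul_sr, sub_eq_neg_add, pow_val_add ha]
      rw [← mul_assoc, hconj, neg_neg, mul_assoc]
    · simp only [sr_mul_r, pow_val_add ha, mul_assoc]
    · simp only [sr_mul_sr, sub_eq_neg_add, pow_val_add ha]
      rw [hconj, mul_assoc, ← mul_assoc b, hb, one_mul]

variable (ha : a ^ n = 1) (hb : b * b = 1) (hab : b * a * b = a⁻¹)

@[simp] theorem lift_r (i : ZMod n) : lift a b ha hb hab (r i) = a ^ i.val := rfl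

@[simp] theorem lift_sr (i : ZMod n) : lift a b ha hb hab (sr i) = b * a ^ i.val := rfl

theorem range_lift : (lift a b ha hb hab).range = Subgroup.closure {a, b} := by
  apply le_antisymm
  · have ha' : a ∈ Subgroup.closure {a, b} := Subgroup.subset_closure (by simp)
    have hb' : b ∈ Subgroup.closure {a, b} := Subgroup.subset_closure (by simp)
    rintro _ ⟨i | i, rfl⟩
    · exact pow_mem ha' _
    · exact mul_mem hb' (pow_mem ha' _)
  · rw [Subgroup.closure_le, Set.insert_subset_iff, Set.singleton_subset_iff]
    refine ⟨⟨r 1, ?_⟩, ⟨sr 0, ?_⟩⟩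
    · simpa using pow_val_natCast ha 1
    · simp

theorem lift_injective (hn : 2 < n) (hord : orderOf a = n) :
    Function.Injective (lift a b ha hb hab) := by
  rw [injective_iff_map_eq_one]
  rintro (i | i) h
  · rw [lift_r] at h
    have hdvd := orderOf_dvd_of_pow_eq_one h
    rw [hord] at hdvd
    have : i.val = 0 := Nat.eq_zero_of_dvd_of_lt hdvd i.val_lt
    rw [(ZMod.val_eq_zero i).mp this, r_zero]
  · exfalso
    rw [lift_sr] at h
    -- `b` would be a power of `a`, hence commute with it, and then `b a b = a⁻¹` gives `a² = 1`.
    have hcomm : Commute b a := by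
      rw [eq_inv_of_mul_eq_one_left h]
      exact ((Commute.refl a).pow_left _).inv_left
    have : a ^ 2 = 1 := by
      rw [hcomm.eq, mul_assoc, hb, mul_one] at hab
      rw [sq]
      nth_rewrite 1 [hab]
      exact inv_mul_cancel a
    have hdvd := orderOf_dvd_of_pow_eq_one this
    rw [hord] at hdvd
    exact absurd (Nat.le_of_dvd two_pos hdvd) (not_le.mpr hn)

end DihedralGroup

theorem neg_one_pow_val_add_one (x : ZMod 2) : (-1 : ℂ) ^ (x + 1).val = -(-1) ^ x.val := by
  rw [ZMod.val_add, ← neg_one_pow_eq_pow_mod_two, ZMod.val_one, pow_succ, mul_neg_one]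

theorem shiftX2_mul_self (n : ℕ) (k : Fin n) : shiftX2 n k * shiftX2 n k = 1 := by
  ext u v
  have h : (Pi.single k 1 + Pi.single k 1 : Fin n → ZMod 2) = 0 := by
    rw [← Pi.single_add, show (1 + 1 : ZMod 2) = 0 from rfl, Pi.single_zero]
  simp [shiftX2, Matrix.mul_apply, Matrix.one_apply, add_assoc, h]

theorem clockZ2_mul_self (n : ℕ) (k : Fin n) : clockZ2 n k * clockZ2 n k = 1 := by
  rw [clockZ2, Matrix.diagonal_mul_diagonal, ← Matrix.diagonal_one]
  congr 1; ext v
  rw [← pow_add, ← two_mul, pow_mul, neg_one_sq, one_pow]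

theorem clockZ2_mul_shiftX2 (n : ℕ) (k : Fin n) :
    clockZ2 n k * shiftX2 n k = -(shiftX2 n k * clockZ2 n k) := by
  ext u v
  simp only [clockZ2, Matrix.diagonal_mul, Matrix.mul_diagonal, Matrix.neg_apply, shiftX2,
    Matrix.of_apply]
  split_ifs with h
  · subst h; simp [neg_one_pow_val_add_one]
  · simp

theorem shiftX2_mul_clockZ2_sq (n : ℕ) (k : Fin n) : (shiftX2 n k * clockZ2 n k) ^ 2 = -1 := by
  rw [sq, mul_assoc, ← mul_assoc (clockZ2 n k), clockZ2_mul_shiftX2, neg_mul, mul_neg,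
    ← mul_assoc, ← mul_assoc, shiftX2_mul_self, one_mul, clockZ2_mul_self]

theorem shiftX2_map_conj (n : ℕ) (k : Fin n) :
    (shiftX2 n k).map (starRingEnd ℂ) = shiftX2 n k := by
  ext u v
  simp [shiftX2]

theorem clockZ2_map_conj (n : ℕ) (k : Fin n) :
    (clockZ2 n k).map (starRingEnd ℂ) = clockZ2 n k := by
  simp [clockZ2]

theorem Subgroup.card_eq_prime_of_bot_lt_of_lt {G : Type*} [Group G] {p : ℕ} (hp : p.Prime)
    {H K : Subgroup G} (hK : Nat.card K = p ^ 2) (hbot : ⊥ < H) (hHK : H < K) :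
    Nat.card H = p := by
  obtain ⟨m, hm, hcard⟩ := (Nat.dvd_prime_pow hp).mp (hK ▸ Subgroup.card_dvd_of_le hHK.le)
  have : Finite K := Nat.finite_of_card_ne_zero (by rw [hK]; exact pow_ne_zero 2 hp.ne_zero)
  interval_cases m
  · exact absurd (Subgroup.card_eq_one.mp (by rw [hcard, pow_zero])) hbot.ne'
  · rw [hcard, pow_one]
  · exact absurd (Subgroup.eq_of_le_of_card_ge hHK.le (by rw [hcard, hK])) hHK.ne

local notation "Mat" n => Matrix (Fin n → ZMod 2) (Fin n → ZMod 2) ℂ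

namespace PauliGroup2

variable {n : ℕ}

theorem ext {x y : PauliGroup2 n} (h : ((x : (Mat n)ˣ) : Mat n) = ((y : (Mat n)ˣ) : Mat n)) :
    x = y :=
  Subtype.ext (Units.ext h)

def X (k : Fin n) : PauliGroup2 n :=
  ⟨⟨shiftX2 n k, shiftX2 n k, shiftX2_mul_self n k, shiftX2_mul_self n k⟩,
    Subgroup.subset_closure (Or.inr ⟨k, Or.inl rfl⟩)⟩

def Z (k : Fin n) : PauliGroup2 n :=
  ⟨⟨clockZ2 n k, clockZ2 n k, clockZ2_mul_self n k, clockZ2_mul_self n k⟩,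
    Subgroup.subset_closure (Or.inr ⟨k, Or.inr rfl⟩)⟩

noncomputable def scalarI (n : ℕ) : PauliGroup2 n :=
  ⟨Units.map (algebraMap ℂ (Mat n)).toMonoidHom (Units.mk0 Complex.I Complex.I_ne_zero),
    Subgroup.subset_closure (Or.inl (Algebra.algebraMap_eq_smul_one _))⟩

theorem coe_scalarI : ((scalarI n : (Mat n)ˣ) : Mat n) = Complex.I • 1 :=
  Algebra.algebraMap_eq_smul_one _

theorem X_mul_self (k : Fin n) : X k * X k = 1 := ext (shiftX2_mul_self n k)

theorem Z_mul_self (k : Fin n) : Z k * Z k = 1 := ext (clockZ2_mul_self n k)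

theorem scalarI_mem_center : scalarI n ∈ Subgroup.center (PauliGroup2 n) :=
  Subgroup.mem_center_iff.mpr fun _ => ext (Algebra.commutes Complex.I _).symm

theorem coe_scalarI_sq : (((scalarI n ^ 2 : PauliGroup2 n) : (Mat n)ˣ) : Mat n) = -1 := by
  change algebraMap ℂ (Mat n) Complex.I ^ 2 = -1
  rw [← map_pow, Complex.I_sq, map_neg, map_one]

theorem scalarI_sq_ne_one : scalarI n ^ 2 ≠ 1 := by
  intro h
  have h' : (-1 : Mat n) = 1 := by rw [← coe_scalarI_sq, h]; rfl
  have := congrFun₂ h' 0 0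
  norm_num at this

theorem scalarI_pow_four : scalarI n ^ 4 = 1 := by
  apply ext
  rw [show 4 = 2 * 2 from rfl, pow_mul, Subgroup.coe_pow, Units.val_pow_eq_pow_val,
    coe_scalarI_sq]
  norm_num

theorem orderOf_scalarI : orderOf (scalarI n) = 4 :=
  orderOf_eq_prime_pow (p := 2) (n := 1) (by rw [pow_one]; exact scalarI_sq_ne_one)
    scalarI_pow_four

theorem X_mul_Z_sq (k : Fin n) : (X k * Z k) ^ 2 = scalarI n ^ 2 := by
  apply ext
  rw [coe_scalarI_sq]
  exact shiftX2_mul_clockZ2_sq n k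

theorem orderOf_X_mul_Z (k : Fin n) : orderOf (X k * Z k) = 4 := by
  refine orderOf_eq_prime_pow (p := 2) (n := 1) ?_ ?_
  · rw [pow_one, X_mul_Z_sq]
    exact scalarI_sq_ne_one
  · rw [show 2 ^ (1 + 1) = 2 * 2 from rfl, pow_mul, X_mul_Z_sq, ← pow_mul]
    exact scalarI_pow_four

theorem X_mul_X_mul_Z_mul_X (k : Fin n) : X k * (X k * Z k) * X k = (X k * Z k)⁻¹ := by
  rw [_root_.mul_inv_rev, inv_eq_of_mul_eq_one_right (X_mul_self k),
    inv_eq_of_mul_eq_one_right (Z_mul_self k), ← mul_assoc, X_mul_self, one_mul]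

noncomputable def dihedralHom (k : Fin n) : DihedralGroup 4 →* PauliGroup2 n :=
  DihedralGroup.lift (X k * Z k) (X k) (orderOf_X_mul_Z k ▸ pow_orderOf_eq_one _) (X_mul_self k)
    (X_mul_X_mul_Z_mul_X k)

theorem dihedralHom_injective (k : Fin n) : Function.Injective (dihedralHom k) :=
  DihedralGroup.lift_injective _ _ _ (by norm_num) (orderOf_X_mul_Z k)

theorem range_dihedralHom (k : Fin n) :
    (dihedralHom k).range = Subgroup.closure {X k * Z k, X k} :=
  DihedralGroup.range_lift _ _ _

/-- The elements with real entries, as the fixed points of entrywise conjugation. -/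
noncomputable def realSubgroup (n : ℕ) : Subgroup (PauliGroup2 n) :=
  MonoidHom.eqLocus
    ((Units.map (starRingEnd ℂ).mapMatrix.toMonoidHom).comp (PauliGroup2 n).subtype)
    (PauliGroup2 n).subtype

theorem X_mem_realSubgroup (k : Fin n) : X k ∈ realSubgroup n :=
  Units.ext (shiftX2_map_conj n k)

theorem Z_mem_realSubgroup (k : Fin n) : Z k ∈ realSubgroup n :=
  Units.ext (clockZ2_map_conj n k)

theorem scalarI_notMem_realSubgroup : scalarI n ∉ realSubgroup n := by
  intro h
  have h00 := congrArg (fun u : (Mat n)ˣ => (u : Mat n) 0 0) h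
  norm_num [coe_scalarI, Complex.ext_iff] at h00

theorem range_dihedralHom_le_realSubgroup (k : Fin n) :
    (dihedralHom k).range ≤ realSubgroup n := by
  rw [range_dihedralHom, Subgroup.closure_le, Set.insert_subset_iff, Set.singleton_subset_iff]
  exact ⟨mul_mem (X_mem_realSubgroup k) (Z_mem_realSubgroup k), X_mem_realSubgroup k⟩

theorem closure_scalarI_X_Z :
    Subgroup.closure (insert (scalarI n) (Set.range X ∪ Set.range Z)) = ⊤ := by
  refine eq_top_iff.mpr <| (Subgroup.closure_closure_coe_preimage).symm.le.trans <|
    Subgroup.closure_mono ?_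
  rintro x (hx | ⟨k, hx | hx⟩)
  · exact Or.inl (ext (hx.trans coe_scalarI.symm))
  · exact Or.inr (Or.inl ⟨k, (ext hx).symm⟩)
  · exact Or.inr (Or.inr ⟨k, (ext hx).symm⟩)

theorem X_mem_range_dihedralHom (k : Fin n) : X k ∈ (dihedralHom k).range := by
  rw [range_dihedralHom]
  exact Subgroup.subset_closure (by simp)

theorem X_mul_Z_mem_range_dihedralHom (k : Fin n) : X k * Z k ∈ (dihedralHom k).range := by
  rw [range_dihedralHom]
  exact Subgroup.subset_closure (by simp)

theorem Z_mem_range_dihedralHom (k : Fin n) : Z k ∈ (dihedralHom k).range := by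
  rw [← one_mul (Z k), ← X_mul_self k, mul_assoc]
  exact mul_mem (X_mem_range_dihedralHom k) (X_mul_Z_mem_range_dihedralHom k)

theorem range_dihedralHom_sup_zpowers_scalarI :
    (dihedralHom (0 : Fin 1)).range ⊔ Subgroup.zpowers (scalarI 1) = ⊤ := by
  rw [eq_top_iff, ← closure_scalarI_X_Z, Subgroup.closure_le]
  rintro _ (rfl | ⟨k, rfl⟩ | ⟨k, rfl⟩)
  · exact Subgroup.mem_sup_right (Subgroup.mem_zpowers _)
  · rw [Subsingleton.elim k 0]
    exact Subgroup.mem_sup_left (X_mem_range_dihedralHom 0)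
  · rw [Subsingleton.elim k 0]
    exact Subgroup.mem_sup_left (Z_mem_range_dihedralHom 0)

theorem card_zpowers_scalarI : Nat.card (Subgroup.zpowers (scalarI n)) = 4 := by
  rw [Nat.card_zpowers, orderOf_scalarI]

theorem card_range_dihedralHom_inf_zpowers_scalarI (k : Fin n) :
    Nat.card ((dihedralHom k).range ⊓ Subgroup.zpowers (scalarI n) :) = 2 := by
  refine Subgroup.card_eq_prime_of_bot_lt_of_lt Nat.prime_two card_zpowers_scalarI ?_ ?_
  · have hsq : scalarI n ^ 2 ∈ (dihedralHom k).range ⊓ Subgroup.zpowers (scalarI n) :=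
      ⟨X_mul_Z_sq k ▸ pow_mem (X_mul_Z_mem_range_dihedralHom k) 2,
        pow_mem (Subgroup.mem_zpowers _) 2⟩
    exact bot_lt_iff_ne_bot.mpr fun h => scalarI_sq_ne_one (by rwa [h, Subgroup.mem_bot] at hsq)
  · refine SetLike.lt_iff_le_and_exists.mpr
      ⟨inf_le_right, scalarI n, Subgroup.mem_zpowers _, fun h => ?_⟩
    exact scalarI_notMem_realSubgroup (range_dihedralHom_le_realSubgroup k h.1)

end PauliGroup2

/-- `P_{1,2}` is the weak central product of a dihedral group of order `8`
and a central cyclic group of order `4`, amalgamated over a subgroup of order `2`: there are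
subgroups `D ≃ DihedralGroup 4` and `C` cyclic of order `4` with `C ≤ Z(P_{1,2})`,
`D ⊔ C = P_{1,2}` and `|D ∩ C| = 2`. -/
theorem pauli_one_two_weak_central_product :
    ∃ D C : Subgroup ↥(PauliGroup2 1),
      Nonempty (↥D ≃* DihedralGroup 4) ∧
      IsCyclic ↥C ∧ Nat.card ↥C = 4 ∧
      C ≤ Subgroup.center ↥(PauliGroup2 1) ∧
      D ⊔ C = ⊤ ∧
      Nat.card ↥(D ⊓ C) = 2 :=
  ⟨(PauliGroup2.dihedralHom 0).range, Subgroup.zpowers (PauliGroup2.scalarI 1),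
    ⟨(MonoidHom.ofInjective (PauliGroup2.dihedralHom_injective 0)).symm⟩, inferInstance,
    PauliGroup2.card_zpowers_scalarI, Subgroup.zpowers_le.mpr PauliGroup2.scalarI_mem_center,
    PauliGroup2.range_dihedralHom_sup_zpowers_scalarI,
    PauliGroup2.card_range_dihedralHom_inf_zpowers_scalarI 0⟩
end

section
/- Let p be an odd prime. Then the Pauli group P_{1,p} is both just nonabelian and minimal nonabelian: P_{1,p} is nonabelian, every quotient of P_{1,p} by a nontrivial normal subgroup is abelian, and every proper subgroup of P_{1,p} is abelian. -/
open Matrix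

/-- The root of unity `ω = exp(2πi/p)`. -/
noncomputable def omegaP (p : ℕ) : ℂ := Complex.exp (2 * Real.pi * Complex.I / p)

/-- The shift matrix `X_k` on `n` qudits of dimension `p`:
`(X_k)_{u,v} = 1` if `u = v + e_k`, else `0`. -/
def shiftXP (p n : ℕ) (k : Fin n) :
    Matrix (Fin n → ZMod p) (Fin n → ZMod p) ℂ :=
  Matrix.of fun u v => if u = v + Pi.single k 1 then 1 else 0

/-- The clock matrix `Z_k` on `n` qudits of dimension `p`: diagonal with
`(Z_k)_{v,v} = ω^{(v k).val}`. -/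
noncomputable def clockZP (p n : ℕ) (k : Fin n) :
    Matrix (Fin n → ZMod p) (Fin n → ZMod p) ℂ :=
  Matrix.diagonal fun v => omegaP p ^ (v k).val

/-- The Pauli group `P_{n,p}` on `n` qudits of prime dimension `p`: the subgroup of the units
of the matrix ring generated by the scalar matrix `ω·I` and the matrices `X_k`, `Z_k`. -/
noncomputable def PauliGroupP (p n : ℕ) [NeZero p] :
    Subgroup (Matrix (Fin n → ZMod p) (Fin n → ZMod p) ℂ)ˣ :=
  Subgroup.closure
    {u : (Matrix (Fin n → ZMod p) (Fin n → ZMod p) ℂ)ˣ |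
      (u : Matrix (Fin n → ZMod p) (Fin n → ZMod p) ℂ) = omegaP p • 1 ∨
      ∃ k : Fin n,
        (u : Matrix (Fin n → ZMod p) (Fin n → ZMod p) ℂ) = shiftXP p n k ∨
        (u : Matrix (Fin n → ZMod p) (Fin n → ZMod p) ℂ) = clockZP p n k}

/-!
Writing `ω^a X^b Z^c` for the matrix with exponents `(a, b, c) ∈ (ZMod p)³` identifies `P_{1,p}`
with the Heisenberg group over `ZMod p`: it has order `p³` and
`⁅ω^a X^b Z^c, ω^a' X^b' Z^c'⁆ = ω^(c b' - c' b)`. Proper subgroups have order at most `p²`, hence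
are abelian. A nontrivial normal subgroup contains a nontrivial power of `ω`: either its element
is already central, or commuting it with `X` or `Z` produces one. So it contains all of `⟨ω⟩`,
which is the commutator subgroup, and the quotient is abelian.
-/

open scoped commutatorElement

theorem Subgroup.isMulCommutative_of_ne_top_of_card_eq_prime_cube {G : Type*} [Group G] {p : ℕ}
    [Fact p.Prime] (hG : Nat.card G = p ^ 3) {H : Subgroup G} (hH : H ≠ ⊤) :
    IsMulCommutative H := by
  have : Finite G := Nat.finite_of_card_ne_zero (by simp [hG, (Fact.out : p.Prime).ne_zero])
  obtain ⟨k, hk, hcard⟩ := (Nat.dvd_prime_pow Fact.out).mp (hG ▸ H.card_subgroup_dvd_card)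
  interval_cases k
  · have : Subsingleton H := (Nat.card_eq_one_iff_unique.mp hcard).1
    exact ⟨⟨fun _ _ => Subsingleton.elim _ _⟩⟩
  · have := isCyclic_of_prime_card (pow_one p ▸ hcard)
    infer_instance
  · exact IsPGroup.isMulCommutative_of_card_eq_prime_sq hcard
  · exact absurd (H.eq_top_of_card_eq (hcard.trans hG.symm)) hH

section OmegaP

variable {d : ℕ} [NeZero d]

theorem omegaP_pow_val (t : ZMod d) : omegaP d ^ t.val = ZMod.stdAddChar t := by
  rw [ZMod.stdAddChar_apply, ZMod.toCircle_apply, omegaP, ← Complex.exp_nat_mul]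
  congr 1
  ring

theorem omegaP_eq_stdAddChar_one : omegaP d = ZMod.stdAddChar (1 : ZMod d) := by
  simpa [omegaP] using (ZMod.stdAddChar_coe (N := d) 1).symm

end OmegaP

namespace PauliGroupP

section Weyl

variable {d : ℕ} [NeZero d]

/-- The matrix `ω^a X^b Z^c`, with `ω^t` written as `ZMod.stdAddChar t` (see `omegaP_pow_val`). -/
noncomputable def weyl (a b c : ZMod d) : Matrix (Fin 1 → ZMod d) (Fin 1 → ZMod d) ℂ :=
  of fun u v => if u = v + fun _ => b then ZMod.stdAddChar (a + c * v 0) else 0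

theorem weyl_apply_add (a b c : ZMod d) (v : Fin 1 → ZMod d) :
    weyl a b c (v + fun _ => b) v = ZMod.stdAddChar (a + c * v 0) :=
  if_pos rfl

theorem weyl_apply_of_ne {a b c : ZMod d} {u v : Fin 1 → ZMod d} (h : u ≠ v + fun _ => b) :
    weyl a b c u v = 0 :=
  if_neg h

theorem weyl_mul (a b c a' b' c' : ZMod d) :
    weyl a b c * weyl a' b' c' = weyl (a + a' + c * b') (b + b') (c + c') := by
  ext u v
  rw [mul_apply, Finset.sum_eq_single (v + fun _ => b') (fun w _ hw => by
    rw [weyl_apply_of_ne hw, mul_zero]) (by simp), weyl_apply_add]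
  have hshift : (v + fun _ => b') + (fun _ => b) = v + fun _ => b + b' := by
    funext; simp [add_comm b, add_assoc]
  by_cases h : u = v + fun _ => b + b'
  · rw [h, ← hshift, weyl_apply_add, hshift, weyl_apply_add, ← AddChar.map_add_eq_mul]
    simp only [Pi.add_apply]
    ring_nf
  · rw [weyl_apply_of_ne (by rwa [hshift]), weyl_apply_of_ne h, zero_mul]

theorem weyl_eq_diagonal (a c : ZMod d) :
    weyl a 0 c = diagonal fun v => ZMod.stdAddChar (a + c * v 0) := by
  ext u v
  have hzero : (fun _ => 0 : Fin 1 → ZMod d) = 0 := rfl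
  by_cases h : u = v <;> simp [weyl, hzero, h]

theorem weyl_zero : weyl (0 : ZMod d) 0 0 = 1 := by
  simp [weyl_eq_diagonal, diagonal_one]

theorem weyl_inj {a b c a' b' c' : ZMod d} :
    weyl a b c = weyl a' b' c' ↔ a = a' ∧ b = b' ∧ c = c' := by
  refine ⟨fun h => ?_, by rintro ⟨rfl, rfl, rfl⟩; rfl⟩
  have hb : b = b' := by
    by_contra hb
    have := congr_fun₂ h (0 + fun _ => b) 0
    rw [weyl_apply_add, weyl_apply_of_ne (by simpa [funext_iff] using hb)] at this
    exact ((ZMod.stdAddChar (N := d)).val_isUnit _).ne_zero this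
  subst hb
  have ha := congr_fun₂ h (0 + fun _ => b) 0
  have hc := congr_fun₂ h ((fun _ => 1) + fun _ => b) (fun _ => 1)
  simp only [weyl_apply_add] at ha hc
  simp only [Pi.zero_apply, mul_zero, add_zero, mul_one, ZMod.injective_stdAddChar.eq_iff] at ha hc
  exact ⟨ha, rfl, by simpa [ha] using hc⟩

theorem weyl_one_zero_zero : weyl (1 : ZMod d) 0 0 = omegaP d • 1 := by
  simp [weyl_eq_diagonal, omegaP_eq_stdAddChar_one, smul_one_eq_diagonal]

theorem weyl_zero_one_zero : weyl (0 : ZMod d) 1 0 = shiftXP d 1 0 := by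
  have hsingle : (Pi.single 0 1 : Fin 1 → ZMod d) = fun _ => 1 := by
    funext i
    rw [Subsingleton.elim i 0, Pi.single_eq_same]
  ext u v
  by_cases h : u = v + fun _ => 1 <;> simp [weyl, shiftXP, hsingle, h]

theorem weyl_zero_zero_one : weyl (0 : ZMod d) 0 1 = clockZP d 1 0 := by
  simp [weyl_eq_diagonal, clockZP, omegaP_pow_val]

noncomputable def weylUnit (a b c : ZMod d) : (Matrix (Fin 1 → ZMod d) (Fin 1 → ZMod d) ℂ)ˣ where
  val := weyl a b c
  inv := weyl (c * b - a) (-b) (-c)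
  val_inv := by rw [weyl_mul, ← weyl_zero]; congr 1 <;> ring
  inv_val := by rw [weyl_mul, ← weyl_zero]; congr 1 <;> ring

theorem weylUnit_mul (a b c a' b' c' : ZMod d) :
    weylUnit a b c * weylUnit a' b' c' = weylUnit (a + a' + c * b') (b + b') (c + c') :=
  Units.ext (weyl_mul a b c a' b' c')

theorem weylUnit_zero : weylUnit (0 : ZMod d) 0 0 = 1 :=
  Units.ext weyl_zero

theorem weylUnit_inv (a b c : ZMod d) : (weylUnit a b c)⁻¹ = weylUnit (c * b - a) (-b) (-c) :=
  Units.ext rfl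

theorem weylUnit_pow {a b c : ZMod d} (hcb : c * b = 0) (m : ℕ) :
    weylUnit a b c ^ m = weylUnit ((m : ZMod d) * a) (m * b) (m * c) := by
  induction m with
  | zero => simp [weylUnit_zero]
  | succ m ih =>
    rw [pow_succ, ih, weylUnit_mul, mul_assoc, hcb]
    congr 1 <;> push_cast <;> ring

theorem weylUnit_mem (a b c : ZMod d) : weylUnit a b c ∈ PauliGroupP d 1 := by
  have hω : weylUnit (1 : ZMod d) 0 0 ∈ PauliGroupP d 1 :=
    Subgroup.subset_closure (.inl weyl_one_zero_zero)
  have hX : weylUnit (0 : ZMod d) 1 0 ∈ PauliGroupP d 1 :=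
    Subgroup.subset_closure (.inr ⟨0, .inl weyl_zero_one_zero⟩)
  have hZ : weylUnit (0 : ZMod d) 0 1 ∈ PauliGroupP d 1 :=
    Subgroup.subset_closure (.inr ⟨0, .inr weyl_zero_zero_one⟩)
  have hdecomp : weylUnit a b c =
      weylUnit 1 0 0 ^ a.val * weylUnit 0 1 0 ^ b.val * weylUnit 0 0 1 ^ c.val := by
    rw [weylUnit_pow (zero_mul (0 : ZMod d)), weylUnit_pow (zero_mul (1 : ZMod d)),
      weylUnit_pow (mul_zero (1 : ZMod d)), weylUnit_mul, weylUnit_mul]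
    simp only [ZMod.natCast_zmod_val]
    congr 1 <;> ring
  rw [hdecomp]
  exact mul_mem (mul_mem (pow_mem hω _) (pow_mem hX _)) (pow_mem hZ _)

theorem mem_iff_exists_weylUnit {u : (Matrix (Fin 1 → ZMod d) (Fin 1 → ZMod d) ℂ)ˣ} :
    u ∈ PauliGroupP d 1 ↔ ∃ a b c, weylUnit a b c = u := by
  refine ⟨fun hu => ?_, by rintro ⟨a, b, c, rfl⟩; exact weylUnit_mem a b c⟩
  induction hu using Subgroup.closure_induction with
  | mem u hu =>
    obtain hu | ⟨k, hu | hu⟩ := hu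
    · exact ⟨1, 0, 0, Units.ext (weyl_one_zero_zero.trans hu.symm)⟩
    all_goals rw [Subsingleton.elim k 0] at hu
    · exact ⟨0, 1, 0, Units.ext (weyl_zero_one_zero.trans hu.symm)⟩
    · exact ⟨0, 0, 1, Units.ext (weyl_zero_zero_one.trans hu.symm)⟩
  | one => exact ⟨0, 0, 0, weylUnit_zero⟩
  | mul _ _ _ _ hu hv =>
    obtain ⟨⟨a, b, c, rfl⟩, ⟨a', b', c', rfl⟩⟩ := And.intro hu hv
    exact ⟨_, _, _, (weylUnit_mul a b c a' b' c').symm⟩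
  | inv _ _ hu =>
    obtain ⟨a, b, c, rfl⟩ := hu
    exact ⟨_, _, _, (weylUnit_inv a b c).symm⟩

noncomputable def weylElem (a b c : ZMod d) : PauliGroupP d 1 :=
  ⟨weylUnit a b c, weylUnit_mem a b c⟩

theorem weylElem_mul (a b c a' b' c' : ZMod d) :
    weylElem a b c * weylElem a' b' c' = weylElem (a + a' + c * b') (b + b') (c + c') :=
  Subtype.ext (weylUnit_mul a b c a' b' c')

theorem weylElem_zero : weylElem (0 : ZMod d) 0 0 = 1 :=
  Subtype.ext weylUnit_zero

theorem weylElem_inv (a b c : ZMod d) : (weylElem a b c)⁻¹ = weylElem (c * b - a) (-b) (-c) :=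
  Subtype.ext (weylUnit_inv a b c)

theorem weylElem_pow {a b c : ZMod d} (hcb : c * b = 0) (m : ℕ) :
    weylElem a b c ^ m = weylElem ((m : ZMod d) * a) (m * b) (m * c) :=
  Subtype.ext (weylUnit_pow hcb m)

theorem weylElem_inj {a b c a' b' c' : ZMod d} :
    weylElem a b c = weylElem a' b' c' ↔ a = a' ∧ b = b' ∧ c = c' :=
  Subtype.ext_iff.trans (Units.ext_iff.trans weyl_inj)

theorem exists_weylElem_eq (g : PauliGroupP d 1) : ∃ a b c, weylElem a b c = g := by
  obtain ⟨a, b, c, h⟩ := mem_iff_exists_weylUnit.mp g.2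
  exact ⟨a, b, c, Subtype.ext h⟩

theorem commutatorElement_weylElem (a b c a' b' c' : ZMod d) :
    ⁅weylElem a b c, weylElem a' b' c'⁆ = weylElem (c * b' - c' * b) 0 0 := by
  rw [commutatorElement_def, weylElem_inv, weylElem_inv, weylElem_mul, weylElem_mul, weylElem_mul]
  congr 1 <;> ring

theorem card_pauliGroupP_one : Nat.card (PauliGroupP d 1) = d ^ 3 := by
  have hbij : Function.Bijective fun t : ZMod d × ZMod d × ZMod d => weylElem t.1 t.2.1 t.2.2 :=
    ⟨fun _ _ h => by simpa [Prod.ext_iff] using weylElem_inj.mp h,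
      fun g => (exists_weylElem_eq g).elim fun a ⟨b, c, h⟩ => ⟨(a, b, c), h⟩⟩
  rw [← Nat.card_eq_of_bijective _ hbij, Nat.card_prod, Nat.card_prod, Nat.card_zmod]
  ring

end Weyl

section Prime

variable {p : ℕ} [Fact p.Prime]

theorem weylElem_mem_of_ne_zero {N : Subgroup (PauliGroupP p 1)} {t₀ : ZMod p} (ht₀ : t₀ ≠ 0)
    (h : weylElem t₀ 0 0 ∈ N) (t : ZMod p) : weylElem t 0 0 ∈ N := by
  have hpow := N.pow_mem h (t / t₀).val
  rwa [weylElem_pow (mul_zero 0), ZMod.natCast_zmod_val, div_mul_cancel₀ t ht₀, mul_zero] at hpow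

theorem exists_weylElem_ne_zero_mem {N : Subgroup (PauliGroupP p 1)} [N.Normal] (hN : N ≠ ⊥) :
    ∃ t ≠ 0, weylElem t 0 0 ∈ N := by
  obtain ⟨g, hgN, hg⟩ := N.bot_or_exists_ne_one.resolve_left hN
  obtain ⟨a, b, c, rfl⟩ := exists_weylElem_eq g
  have hcomm (b' c' : ZMod p) : weylElem (c' * b - c * b') 0 0 ∈ N := by
    rw [← commutatorElement_weylElem 0]
    exact N.mul_mem (‹N.Normal›.conj_mem _ hgN _) (N.inv_mem hgN)
  by_cases hb : b = 0
  · by_cases hc : c = 0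
    · subst hb hc
      exact ⟨a, fun ha => hg (by rw [ha, weylElem_zero]), hgN⟩
    · exact ⟨-c, neg_ne_zero.mpr hc, by simpa using hcomm 1 0⟩
  · exact ⟨b, hb, by simpa using hcomm 0 1⟩

theorem commutator_le_of_ne_bot {N : Subgroup (PauliGroupP p 1)} [N.Normal] (hN : N ≠ ⊥) :
    commutator (PauliGroupP p 1) ≤ N := by
  obtain ⟨t₀, ht₀, hmem⟩ := exists_weylElem_ne_zero_mem hN
  refine Subgroup.commutator_le.mpr fun g _ h _ => ?_
  obtain ⟨a, b, c, rfl⟩ := exists_weylElem_eq g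
  obtain ⟨a', b', c', rfl⟩ := exists_weylElem_eq h
  rw [commutatorElement_weylElem]
  exact weylElem_mem_of_ne_zero ht₀ hmem _

end Prime

end PauliGroupP

theorem pauli_one_p_just_and_minimal_nonabelian_general (p : ℕ) [Fact p.Prime] :
    (∃ a b : ↥(PauliGroupP p 1), a * b ≠ b * a) ∧
    (∀ (N : Subgroup ↥(PauliGroupP p 1)) [N.Normal], N ≠ ⊥ →
      ∀ x y : ↥(PauliGroupP p 1) ⧸ N, x * y = y * x) ∧
    (∀ H : Subgroup ↥(PauliGroupP p 1), H ≠ ⊤ → ∀ a b : ↥H, a * b = b * a) := by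
  open PauliGroupP in
  refine ⟨⟨weylElem 0 0 1, weylElem 0 1 0, ?_⟩, fun N _ hN x y => ?_, fun H hH a b => ?_⟩
  · rw [ne_eq, ← commutatorElement_eq_one_iff_mul_comm, commutatorElement_weylElem,
      ← weylElem_zero, weylElem_inj]
    simp
  · exact (Subgroup.Normal.quotient_commutative_iff_commutator_le.mpr
      (commutator_le_of_ne_bot hN)).is_comm.comm x y
  · exact (Subgroup.isMulCommutative_of_ne_top_of_card_eq_prime_cube
      (card_pauliGroupP_one (d := p)) hH).is_comm.comm a b

/-- For an odd prime `p`, the Pauli group `P_{1,p}` is both just nonabelian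
and minimal nonabelian: it is nonabelian, every quotient by a nontrivial normal subgroup is
abelian, and every proper subgroup is abelian. -/
theorem pauli_one_p_just_and_minimal_nonabelian (p : ℕ) [Fact p.Prime] (hp : p ≠ 2) :
    (∃ a b : ↥(PauliGroupP p 1), a * b ≠ b * a) ∧
    (∀ (N : Subgroup ↥(PauliGroupP p 1)) [N.Normal], N ≠ ⊥ →
      ∀ x y : ↥(PauliGroupP p 1) ⧸ N, x * y = y * x) ∧
    (∀ H : Subgroup ↥(PauliGroupP p 1), H ≠ ⊤ → ∀ a b : ↥H, a * b = b * a) :=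
  pauli_one_p_just_and_minimal_nonabelian_general p
end

section
/- Let p be an odd prime. Then for every n ≥ 1 the Pauli group P_{n,p} is just nonabelian: it is nonabelian, and for every nontrivial normal subgroup N of P_{n,p} the quotient P_{n,p}/N is abelian. -/
open Matrix

set_option linter.unusedSectionVars false
set_option linter.unusedVariables false

namespace PauliAux

variable (p n : ℕ) [Fact p.Prime]

/-- The additive character `c ↦ ω^c` on `ZMod p`. -/
noncomputable def chi (c : ZMod p) : ℂ := omegaP p ^ c.val

lemma hprim : IsPrimitiveRoot (omegaP p) p := by
  simpa [omegaP] using Complex.isPrimitiveRoot_exp p (Fact.out : p.Prime).ne_zero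

lemma omega_pow_p : omegaP p ^ p = 1 := (hprim p).pow_eq_one

lemma pow_mod_eq (m : ℕ) : omegaP p ^ m = omegaP p ^ (m % p) := by
  conv_lhs => rw [← Nat.div_add_mod m p]
  rw [pow_add, pow_mul, omega_pow_p, one_pow, one_mul]

lemma chi_add (a b : ZMod p) : chi p (a + b) = chi p a * chi p b := by
  rw [chi, chi, chi, ZMod.val_add, ← pow_mod_eq, pow_add]

lemma chi_zero : chi p (0 : ZMod p) = 1 := by
  simp [chi]

lemma chi_eq_one_iff (c : ZMod p) : chi p c = 1 ↔ c = 0 := by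
  constructor
  · intro h
    have hd : p ∣ c.val := (hprim p).dvd_of_pow_eq_one _ h
    have hlt : c.val < p := ZMod.val_lt c
    exact (ZMod.val_eq_zero c).mp (Nat.eq_zero_of_dvd_of_lt hd hlt)
  · intro h; rw [h, chi_zero]

variable (a b : ZMod p) (u v s t : Fin n → ZMod p)

/-- The generalized Pauli matrix `ω^a X^u Z^v`. -/
noncomputable def MW (a : ZMod p) (u v : Fin n → ZMod p) :
    Matrix (Fin n → ZMod p) (Fin n → ZMod p) ℂ :=
  Matrix.of fun x y => if x = y + u then chi p (a + ∑ k, v k * y k) else 0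

lemma MW_mul : MW p n a u v * MW p n b s t
    = MW p n (a + b + ∑ k, v k * s k) (u + s) (v + t) := by
  ext x z
  rw [Matrix.mul_apply]
  rw [Finset.sum_eq_single (z + s)]
  · simp only [MW, Matrix.of_apply, if_pos rfl, if_true]
    by_cases h : x = z + s + u
    · have h' : x = z + (u + s) := by rw [h]; ring
      rw [if_pos h, if_pos h']
      rw [← chi_add]
      congr 1
      have : ∑ k, v k * (z + s) k = ∑ k, v k * z k + ∑ k, v k * s k := by
        rw [← Finset.sum_add_distrib]
        congr 1; ext k; simp [mul_add]
      rw [this]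
      have : ∑ k, (v + t) k * z k = ∑ k, v k * z k + ∑ k, t k * z k := by
        rw [← Finset.sum_add_distrib]
        congr 1; ext k; simp [add_mul]
      rw [this]; ring
    · have h' : ¬ x = z + (u + s) := by
        intro hx; exact h (by rw [hx]; ring)
      rw [if_neg h, if_neg h', zero_mul]
  · intro y _ hy
    simp only [MW, Matrix.of_apply]
    rw [if_neg (fun h => hy h), mul_zero]
  · intro h; exact absurd (Finset.mem_univ _) h

lemma MW_one : MW p n (0 : ZMod p) 0 0 = 1 := by
  ext x y
  simp only [MW, Matrix.of_apply, Matrix.one_apply]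
  by_cases h : x = y
  · rw [if_pos (by simp [h]), if_pos h]; simp [chi_zero]
  · rw [if_neg (by simpa using h), if_neg h]

lemma MW_scalar : MW p n a 0 0 = chi p a • (1 : Matrix (Fin n → ZMod p) (Fin n → ZMod p) ℂ) := by
  ext x y
  simp only [MW, Matrix.of_apply, Matrix.smul_apply, Matrix.one_apply, smul_eq_mul]
  by_cases h : x = y
  · rw [if_pos (by simp [h]), if_pos h]; simp
  · rw [if_neg (by simpa using h), if_neg h, mul_zero]

/-- The generalized Pauli matrix as a unit. -/
noncomputable def MU (a : ZMod p) (u v : Fin n → ZMod p) :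
    (Matrix (Fin n → ZMod p) (Fin n → ZMod p) ℂ)ˣ where
  val := MW p n a u v
  inv := MW p n (-a + ∑ k, v k * u k) (-u) (-v)
  val_inv := by
    rw [MW_mul]
    have e1 : a + (-a + ∑ k, v k * u k) + ∑ k, v k * (-u) k = 0 := by
      have : ∑ k, v k * (-u) k = -∑ k, v k * u k := by
        rw [← Finset.sum_neg_distrib]; congr 1; ext k; simp
      rw [this]; ring
    rw [e1, add_neg_cancel, add_neg_cancel, MW_one]
  inv_val := by
    rw [MW_mul]
    have e1 : (-a + ∑ k, v k * u k) + a + ∑ k, (-v) k * u k = 0 := by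
      have : ∑ k, (-v) k * u k = -∑ k, v k * u k := by
        rw [← Finset.sum_neg_distrib]; congr 1; ext k; simp
      rw [this]; ring
    rw [e1, neg_add_cancel, neg_add_cancel, MW_one]

@[simp] lemma MU_val : (MU p n a u v : Matrix (Fin n → ZMod p) (Fin n → ZMod p) ℂ) = MW p n a u v := rfl

lemma MU_mul : MU p n a u v * MU p n b s t
    = MU p n (a + b + ∑ k, v k * s k) (u + s) (v + t) :=
  Units.ext (MW_mul p n a b u v s t)

lemma MU_inv : (MU p n a u v)⁻¹ = MU p n (-a + ∑ k, v k * u k) (-u) (-v) :=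
  Units.ext rfl


lemma sum_single_mul (k : Fin n) (f : Fin n → ZMod p) :
    ∑ j, (Pi.single k (1 : ZMod p) : Fin n → ZMod p) j * f j = f k := by
  rw [Finset.sum_eq_single k]
  · simp
  · intro j _ hj; rw [Pi.single_eq_of_ne hj, zero_mul]
  · intro h; exact absurd (Finset.mem_univ _) h

lemma sum_mul_single (k : Fin n) (f : Fin n → ZMod p) :
    ∑ j, f j * (Pi.single k (1 : ZMod p) : Fin n → ZMod p) j = f k := by
  rw [← sum_single_mul p n k f]; congr 1; ext j; ring

lemma chi_ne_zero (c : ZMod p) : chi p c ≠ 0 :=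
  pow_ne_zero _ (Complex.exp_ne_zero _)

lemma chi_injective : Function.Injective (chi p) := by
  intro a b h
  have h1 : chi p (a - b) * chi p b = chi p a := by
    rw [← chi_add]; congr 1; ring
  rw [h] at h1
  have h2 : chi p (a - b) = 1 :=
    mul_right_cancel₀ (chi_ne_zero p b) (h1.trans (one_mul (chi p b)).symm)
  exact sub_eq_zero.mp ((chi_eq_one_iff p _).mp h2)

lemma MU_exp_inj {a b : ZMod p} {u v : Fin n → ZMod p}
    (h : MU p n a u v = MU p n b u v) : a = b := by
  have h2 : MW p n a u v = MW p n b u v := congrArg Units.val h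
  have h3 := congrFun (congrFun h2 u) 0
  simp only [MW, Matrix.of_apply, zero_add, if_pos rfl] at h3
  simp only [Pi.zero_apply, mul_zero, Finset.sum_const_zero, add_zero] at h3
  exact chi_injective p h3

lemma MW_eq_smul_one : MW p n 1 0 0
    = omegaP p • (1 : Matrix (Fin n → ZMod p) (Fin n → ZMod p) ℂ) := by
  rw [MW_scalar]
  congr 1
  rw [chi, ZMod.val_one_eq_one_mod]
  rw [Nat.mod_eq_of_lt (Fact.out : p.Prime).one_lt, pow_one]

lemma MW_eq_X (k : Fin n) : MW p n 0 (Pi.single k 1) 0 = shiftXP p n k := by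
  ext x y
  simp [MW, shiftXP, chi_zero]

lemma MW_eq_Z (k : Fin n) : MW p n 0 0 (Pi.single k 1) = clockZP p n k := by
  ext x y
  simp only [MW, Matrix.of_apply, clockZP, Matrix.diagonal_apply, add_zero]
  by_cases h : x = y
  · rw [if_pos h, if_pos h, zero_add, sum_single_mul]; subst h; rfl
  · rw [if_neg h, if_neg h]

lemma memS (c : ZMod p) : MU p n c 0 0 ∈ PauliGroupP p n := by
  have h1 : MU p n 1 0 0 ∈ PauliGroupP p n :=
    Subgroup.subset_closure (Or.inl (by rw [MU_val, MW_eq_smul_one]))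
  have hpow : ∀ m : ℕ, (MU p n 1 0 0) ^ m = MU p n (m : ZMod p) 0 0 := by
    intro m
    induction m with
    | zero =>
        rw [pow_zero]
        refine Units.ext ?_
        simp [MW_one]
    | succ m ih =>
        rw [pow_succ, ih, MU_mul]
        have h0 : (0 : Fin n → ZMod p) + 0 = 0 := by simp
        have he : (m : ZMod p) + 1 + ∑ k, (0 : Fin n → ZMod p) k * (0 : Fin n → ZMod p) k
            = ((m + 1 : ℕ) : ZMod p) := by push_cast; simp
        rw [h0, he]
  have : MU p n c 0 0 = (MU p n 1 0 0) ^ c.val := by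
    rw [hpow, ZMod.natCast_rightInverse c]
  rw [this]
  exact Subgroup.pow_mem _ h1 _

lemma memX (k : Fin n) : MU p n 0 (Pi.single k 1) 0 ∈ PauliGroupP p n :=
  Subgroup.subset_closure (Or.inr ⟨k, Or.inl (by rw [MU_val, MW_eq_X])⟩)

lemma memZ (k : Fin n) : MU p n 0 0 (Pi.single k 1) ∈ PauliGroupP p n :=
  Subgroup.subset_closure (Or.inr ⟨k, Or.inr (by rw [MU_val, MW_eq_Z])⟩)

theorem struct {g : (Matrix (Fin n → ZMod p) (Fin n → ZMod p) ℂ)ˣ}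
    (hg : g ∈ PauliGroupP p n) :
    ∃ (a : ZMod p) (u v : Fin n → ZMod p), g = MU p n a u v := by
  refine Subgroup.closure_induction ?_ ?_ ?_ ?_ hg
  · intro x hx
    rcases hx with hω | ⟨k, hX | hZ⟩
    · exact ⟨1, 0, 0, Units.ext (by rw [hω, MU_val, MW_eq_smul_one])⟩
    · exact ⟨0, Pi.single k 1, 0, Units.ext (by rw [hX, MU_val, MW_eq_X])⟩
    · exact ⟨0, 0, Pi.single k 1, Units.ext (by rw [hZ, MU_val, MW_eq_Z])⟩
  · exact ⟨0, 0, 0, Units.ext (by rw [MU_val, MW_one]; rfl)⟩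
  · rintro x y _ _ ⟨a, u, v, rfl⟩ ⟨b, s, t, rfl⟩
    exact ⟨_, _, _, MU_mul p n a b u v s t⟩
  · rintro x _ ⟨a, u, v, rfl⟩
    exact ⟨_, _, _, MU_inv p n a u v⟩

lemma MU_commutator (a b : ZMod p) (u v s t : Fin n → ZMod p) :
    (MU p n b s t * MU p n a u v)⁻¹ * (MU p n a u v * MU p n b s t)
      = MU p n ((∑ k, v k * s k) - ∑ k, t k * u k) 0 0 := by
  rw [MU_mul, MU_mul, MU_inv, MU_mul]
  congr 1
  · simp only [Pi.add_apply, Pi.neg_apply, add_mul, mul_add, neg_mul,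
      Finset.sum_add_distrib, Finset.sum_neg_distrib]
    ring
  · abel
  · abel

end PauliAux

open PauliAux in
/-- For an odd prime `p` and every `n ≥ 1`, the Pauli group `P_{n,p}` is
just nonabelian: it is nonabelian, and every quotient by a nontrivial normal subgroup is
abelian. -/
theorem pauli_n_p_just_nonabelian (p : ℕ) [Fact p.Prime] (hp : p ≠ 2) (n : ℕ) (hn : 1 ≤ n) :
    (∃ a b : ↥(PauliGroupP p n), a * b ≠ b * a) ∧
    (∀ (N : Subgroup ↥(PauliGroupP p n)) [N.Normal], N ≠ ⊥ →
      ∀ x y : ↥(PauliGroupP p n) ⧸ N, x * y = y * x) := by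
  have k0 : Fin n := ⟨0, hn⟩
  constructor
  · -- nonabelian
    refine ⟨⟨MU p n 0 (Pi.single k0 1) 0, memX p n k0⟩,
            ⟨MU p n 0 0 (Pi.single k0 1), memZ p n k0⟩, ?_⟩
    intro hcomm
    have h1 : MU p n 0 (Pi.single k0 1) 0 * MU p n 0 0 (Pi.single k0 1)
        = MU p n 0 0 (Pi.single k0 1) * MU p n 0 (Pi.single k0 1) 0 :=
      congrArg Subtype.val hcomm
    rw [MU_mul, MU_mul] at h1
    simp only [Pi.zero_apply, zero_mul, mul_zero, Finset.sum_const_zero, add_zero,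
      zero_add] at h1
    rw [sum_single_mul p n k0 (Pi.single k0 1), Pi.single_eq_same] at h1
    have h2 := MU_exp_inj p n h1
    exact zero_ne_one h2
  · -- every nontrivial normal subgroup gives abelian quotient
    intro N hNormal hNbot x y
    obtain ⟨⟨g, hgN⟩, hg1⟩ := Subgroup.ne_bot_iff_exists_ne_one.mp hNbot
    have hg1' : g ≠ 1 := fun h => hg1 (Subtype.ext h)
    obtain ⟨a, u, v, hg⟩ := struct p n g.2
    -- step 1: some nonzero scalar lies in N
    have key : ∃ c : ZMod p, c ≠ 0 ∧
        (⟨MU p n c 0 0, memS p n c⟩ : ↥(PauliGroupP p n)) ∈ N := by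
      by_cases huv : u = 0 ∧ v = 0
      · refine ⟨a, ?_, ?_⟩
        · intro ha
          apply hg1'
          apply Subtype.ext
          rw [hg, huv.1, huv.2, ha]
          exact Units.ext (MW_one p n)
        · have hga : (⟨MU p n a 0 0, memS p n a⟩ : ↥(PauliGroupP p n)) = g := by
            apply Subtype.ext
            rw [hg, huv.1, huv.2]
          rw [hga]; exact hgN
      · have hex : ∃ k, u k ≠ 0 ∨ v k ≠ 0 := by
          by_contra hall
          push_neg at hall
          exact huv ⟨funext fun k => (hall k).1, funext fun k => (hall k).2⟩
        obtain ⟨k, hk | hk⟩ := hex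
        · -- conjugate by Z_k
          set h : ↥(PauliGroupP p n) := ⟨MU p n 0 0 (Pi.single k 1), memZ p n k⟩ with hh
          have hcm : (h * g)⁻¹ * (g * h) ∈ N := by
            have heq : (h * g)⁻¹ * (g * h) = g⁻¹ * (h⁻¹ * g * h) := by group
            rw [heq]
            refine N.mul_mem (N.inv_mem hgN) ?_
            simpa using hNormal.conj_mem g hgN h⁻¹
          have hval : (h * g)⁻¹ * (g * h)
              = (⟨MU p n (-(u k)) 0 0, memS p n _⟩ : ↥(PauliGroupP p n)) := by
            apply Subtype.ext
            have : ((h : (Matrix (Fin n → ZMod p) (Fin n → ZMod p) ℂ)ˣ) * g)⁻¹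
                * ((g : (Matrix (Fin n → ZMod p) (Fin n → ZMod p) ℂ)ˣ) * h)
                = MU p n (-(u k)) 0 0 := by
              rw [hg, hh, MU_commutator]
              congr 1
              rw [sum_single_mul p n k u]
              simp
            exact this
          exact ⟨-(u k), neg_ne_zero.mpr hk, hval ▸ hcm⟩
        · -- conjugate by X_k
          set h : ↥(PauliGroupP p n) := ⟨MU p n 0 (Pi.single k 1) 0, memX p n k⟩ with hh
          have hcm : (h * g)⁻¹ * (g * h) ∈ N := by
            have heq : (h * g)⁻¹ * (g * h) = g⁻¹ * (h⁻¹ * g * h) := by group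
            rw [heq]
            refine N.mul_mem (N.inv_mem hgN) ?_
            simpa using hNormal.conj_mem g hgN h⁻¹
          have hval : (h * g)⁻¹ * (g * h)
              = (⟨MU p n (v k) 0 0, memS p n _⟩ : ↥(PauliGroupP p n)) := by
            apply Subtype.ext
            have : ((h : (Matrix (Fin n → ZMod p) (Fin n → ZMod p) ℂ)ˣ) * g)⁻¹
                * ((g : (Matrix (Fin n → ZMod p) (Fin n → ZMod p) ℂ)ˣ) * h)
                = MU p n (v k) 0 0 := by
              rw [hg, hh, MU_commutator]
              congr 1
              rw [sum_mul_single p n k v]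
              simp
            exact this
          exact ⟨v k, hk, hval ▸ hcm⟩
    obtain ⟨c, hc0, hcN⟩ := key
    -- step 2: all scalars lie in N
    have hall : ∀ d : ZMod p,
        (⟨MU p n d 0 0, memS p n d⟩ : ↥(PauliGroupP p n)) ∈ N := by
      intro d
      have hpow : ∀ m : ℕ,
          (⟨MU p n c 0 0, memS p n c⟩ : ↥(PauliGroupP p n)) ^ m
            = ⟨MU p n ((m : ZMod p) * c) 0 0, memS p n _⟩ := by
        intro m
        induction m with
        | zero =>
            apply Subtype.ext
            rw [pow_zero]
            have : ((0 : ℕ) : ZMod p) * c = 0 := by push_cast; ring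
            rw [this]
            exact (Units.ext (MW_one p n)).symm
        | succ m ih =>
            rw [pow_succ, ih]
            apply Subtype.ext
            show MU p n ((m : ZMod p) * c) 0 0 * MU p n c 0 0 = _
            rw [MU_mul]
            have h0 : (0 : Fin n → ZMod p) + 0 = 0 := by simp
            have he : (m : ZMod p) * c + c + ∑ k, (0 : Fin n → ZMod p) k * (0 : Fin n → ZMod p) k
                = ((m + 1 : ℕ) : ZMod p) * c := by push_cast; simp; ring
            rw [h0, he]
      obtain ⟨m, hm⟩ : ∃ m : ℕ, (m : ZMod p) * c = d :=
        ⟨(d * c⁻¹).val, by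
          rw [ZMod.natCast_rightInverse, mul_assoc, inv_mul_cancel₀ hc0, mul_one]⟩
      have hmem := N.pow_mem hcN m
      rw [hpow m, hm] at hmem
      exact hmem
    -- step 3: quotient is abelian
    refine QuotientGroup.induction_on x fun w => QuotientGroup.induction_on y fun z => ?_
    show ((w : ↥(PauliGroupP p n) ⧸ N)) * z = (z : ↥(PauliGroupP p n) ⧸ N) * w
    rw [← QuotientGroup.mk_mul, ← QuotientGroup.mk_mul, QuotientGroup.eq]
    obtain ⟨a1, u1, v1, hw⟩ := struct p n w.2
    obtain ⟨a2, u2, v2, hz⟩ := struct p n z.2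
    have hcmv : (w * z)⁻¹ * (z * w)
        = (⟨MU p n ((∑ k, v2 k * u1 k) - ∑ k, v1 k * u2 k) 0 0, memS p n _⟩ :
            ↥(PauliGroupP p n)) := by
      apply Subtype.ext
      have : ((w : (Matrix (Fin n → ZMod p) (Fin n → ZMod p) ℂ)ˣ) * z)⁻¹
          * ((z : (Matrix (Fin n → ZMod p) (Fin n → ZMod p) ℂ)ˣ) * w)
          = MU p n ((∑ k, v2 k * u1 k) - ∑ k, v1 k * u2 k) 0 0 := by
        rw [hw, hz, MU_commutator]
      exact this
    rw [hcmv]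
    exact hall _
end
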